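/- arXiv:2512.23980 — 6 statements merged into one kernel-verified Lean document; each statement's English description precedes it below -/
import Mathlib

section
/- For coprime integers p, q ≥ 2 with p odd and q odd, the (q-1)/2 × (q-1)/2 matrix M with entries M_{i,j} = sin((2i-1)(2j-1)pπ/q) (for 1 ≤ i,j ≤ (q-1)/2) satisfies MᵀM = (q/4)·I; in particular M is invertible. -/
open Real Matrix

/-!
Product-to-sum turns the entry `(MᵀM)_{jk}` into a difference of two sums
`∑_{i<n} cos ((2i+1) φ)` with `φ = 2mπ/q`, where `q = 2n+1` and `m` is `(j-k)p` or `(j+k+1)p`.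
Multiplying such a sum by `2 sin φ` telescopes to `sin (2nφ) = sin (2mπ - φ) = -sin φ`, so it equals
`-1/2` whenever `q ∤ m`; coprimality of `p` and `q` guarantees this except for `m = 0` on the diagonal,
where the sum is `n`. Hence `(MᵀM)_{jk} = δ_{jk} q/4`.
-/

open Finset

theorem two_mul_sin_mul_sum_range_cos_odd_mul (φ : ℝ) (n : ℕ) :
    2 * sin φ * ∑ i ∈ range n, cos ((2 * i + 1) * φ) = sin (2 * n * φ) := by
  induction n with
  | zero => simp
  | succ n ih =>
    rw [sum_range_succ, mul_add, ih, two_mul_sin_mul_cos]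
    push_cast
    rw [show φ - (2 * n + 1) * φ = -(2 * n * φ) by ring, sin_neg]
    ring_nf

theorem sin_two_mul_pi_div_odd_ne_zero (n : ℕ) {m : ℤ} (hm : ¬ ((2 * n + 1 : ℕ) : ℤ) ∣ m) :
    sin (2 * m * π / (2 * n + 1)) ≠ 0 := by
  rw [Ne, sin_eq_zero_iff]
  rintro ⟨k, hk⟩
  have hk' : ((2 * m : ℤ) : ℝ) = (((2 * n + 1 : ℕ) * k : ℤ) : ℝ) := by
    push_cast
    field_simp at hk
    linarith
  have hq2 : IsCoprime ((2 * n + 1 : ℕ) : ℤ) 2 := ⟨1, -n, by push_cast; ring⟩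
  exact hm (hq2.dvd_of_dvd_mul_left ⟨k, Int.cast_injective hk'⟩)

theorem sum_range_cos_odd_mul_two_pi_div (n : ℕ) {m : ℤ} (hm : ¬ ((2 * n + 1 : ℕ) : ℤ) ∣ m) :
    ∑ i ∈ range n, cos ((2 * i + 1) * (2 * m * π / (2 * n + 1))) = -1 / 2 := by
  set φ := 2 * m * π / (2 * n + 1)
  have hsin : sin (2 * n * φ) = -sin φ := by
    rw [show 2 * n * φ = (m : ℝ) * (2 * π) - φ by simp only [φ]; field_simp; ring,
      sin_int_mul_two_pi_sub]
  have key := two_mul_sin_mul_sum_range_cos_odd_mul φ n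
  rw [hsin] at key
  have hφ : sin φ ≠ 0 := sin_two_mul_pi_div_odd_ne_zero n hm
  field_simp
  apply mul_left_cancel₀ hφ
  linarith

theorem Int.not_dvd_mul_of_coprime {p q : ℕ} (hpq : Nat.Coprime p q) {a : ℤ} (ha : a ≠ 0)
    (haq : |a| < q) : ¬ (q : ℤ) ∣ a * p := fun hdvd =>
  ha <| Int.eq_zero_of_abs_lt_dvd
    ((Nat.isCoprime_iff_coprime.mpr hpq.symm).dvd_of_dvd_mul_right hdvd) haq

theorem sum_range_sin_odd_mul_sin_odd_mul {n p : ℕ} (hp : Nat.Coprime p (2 * n + 1)) {j k : ℕ}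
    (hj : j < n) (hk : k < n) :
    ∑ i ∈ range n, sin ((2 * i + 1) * (2 * j + 1) * p * π / (2 * n + 1)) *
        sin ((2 * i + 1) * (2 * k + 1) * p * π / (2 * n + 1)) =
      if j = k then (2 * n + 1 : ℝ) / 4 else 0 := by
  have hsum : ∀ m₁ m₂ : ℤ, m₁ = ((j : ℤ) - k) * p → m₂ = ((j : ℤ) + k + 1) * p →
      ∑ i ∈ range n, sin ((2 * i + 1) * (2 * j + 1) * p * π / (2 * n + 1)) *
        sin ((2 * i + 1) * (2 * k + 1) * p * π / (2 * n + 1)) =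
      (∑ i ∈ range n, cos ((2 * i + 1) * (2 * m₁ * π / (2 * n + 1))) -
        ∑ i ∈ range n, cos ((2 * i + 1) * (2 * m₂ * π / (2 * n + 1)))) / 2 := by
    rintro m₁ m₂ rfl rfl
    rw [← sum_sub_distrib, sum_div]
    refine sum_congr rfl fun i _ => ?_
    rw [eq_div_iff two_ne_zero, mul_comm, ← mul_assoc, two_mul_sin_mul_sin]
    push_cast
    ring_nf
  have hm₂ : ¬ ((2 * n + 1 : ℕ) : ℤ) ∣ ((j : ℤ) + k + 1) * p :=
    Int.not_dvd_mul_of_coprime hp (by positivity) (by rw [abs_lt]; push_cast; omega)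
  rw [hsum _ _ rfl rfl, sum_range_cos_odd_mul_two_pi_div n hm₂]
  split_ifs with hjk
  · subst hjk
    simp only [sub_self, zero_mul, Int.cast_zero, mul_zero, zero_div, cos_zero, sum_const,
      card_range, nsmul_eq_mul, mul_one]
    ring
  · have hm₁ : ¬ ((2 * n + 1 : ℕ) : ℤ) ∣ ((j : ℤ) - k) * p :=
      Int.not_dvd_mul_of_coprime hp (by omega) (by rw [abs_lt]; push_cast; omega)
    rw [sum_range_cos_odd_mul_two_pi_div n hm₁]
    ring

theorem Matrix.isUnit_of_transpose_mul_self_eq_smul_one {ι K : Type*} [Fintype ι] [DecidableEq ι]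
    [Field K] {M : Matrix ι ι K} {c : K} (hc : c ≠ 0) (h : Mᵀ * M = c • 1) : IsUnit M :=
  (isUnit_iff_isUnit_det M).mpr <| isUnit_det_of_left_inverse (B := c⁻¹ • Mᵀ) <| by
    rw [smul_mul_assoc, h, smul_smul, inv_mul_cancel₀ hc, one_smul]

theorem stmt_0_general (p q : ℕ) (hcop : Nat.Coprime p q) (hqo : Odd q)
    (M : Matrix (Fin ((q - 1) / 2)) (Fin ((q - 1) / 2)) ℝ)
    (hM : ∀ i j : Fin ((q - 1) / 2),
      M i j = Real.sin ((2 * ((i : ℕ) + 1) - 1 : ℝ) * (2 * ((j : ℕ) + 1) - 1) * p * Real.pi / q)) :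
    Mᵀ * M = ((q : ℝ) / 4) • 1 ∧ IsUnit M := by
  obtain ⟨n, rfl⟩ := hqo
  have hn : (2 * n + 1 - 1) / 2 = n := by omega
  have hMM : Mᵀ * M = ((↑(2 * n + 1) : ℝ) / 4) • 1 := by
    ext j k
    have hodd : ∀ i : ℕ, (2 * ((i : ℝ) + 1) - 1) = 2 * i + 1 := fun i => by ring
    simp only [mul_apply, transpose_apply, hM, hodd, Matrix.smul_apply, one_apply, smul_eq_mul,
      mul_ite, mul_one, mul_zero, ← Fin.val_inj]
    rw [Fin.sum_univ_eq_sum_range (fun i => sin ((2 * i + 1) * (2 * j + 1) * p * π / ↑(2 * n + 1)) *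
        sin ((2 * i + 1) * (2 * k + 1) * p * π / ↑(2 * n + 1)))]
    -- `rw [hn]` would also have to rewrite the types of `j` and `k`
    simp only [hn]
    push_cast
    rw [sum_range_sin_odd_mul_sin_odd_mul hcop (by omega) (by omega)]
  exact ⟨hMM, isUnit_of_transpose_mul_self_eq_smul_one (by positivity) hMM⟩

theorem stmt_0 (p q : ℕ) (hcop : Nat.Coprime p q) (hp : 2 ≤ p) (hpq : p < q)
    (hpo : Odd p) (hqo : Odd q)
    (M : Matrix (Fin ((q - 1) / 2)) (Fin ((q - 1) / 2)) ℝ)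
    (hM : ∀ i j : Fin ((q - 1) / 2),
      M i j = Real.sin ((2 * ((i : ℕ) + 1) - 1 : ℝ) * (2 * ((j : ℕ) + 1) - 1) * p * Real.pi / q)) :
    Mᵀ * M = ((q : ℝ) / 4) • 1 ∧ IsUnit M :=
  stmt_0_general p q hcop hqo M hM
end

section
/- For coprime integers p, q with p even, q odd, and 4 ≤ p < q, the (p/2) × (p/2) matrix S with entries S_{i,j} = -sin(pπ/q) sin((2i-1)(2j-1)qπ/p) (for 1 ≤ i,j ≤ p/2) has its row i = p/2 equal to its row i = 1; in particular S is singular. -/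
open Real Matrix

theorem stmt_4 (p q : ℕ) (hcop : Nat.Coprime p q) (hp : 4 ≤ p) (hpq : p < q)
    (hpe : Even p) (hqo : Odd q)
    (S : Matrix (Fin (p / 2)) (Fin (p / 2)) ℝ)
    (hS : ∀ i j : Fin (p / 2),
      S i j = -(Real.sin ((p : ℝ) * Real.pi / q) *
        Real.sin ((2 * ((i : ℕ) + 1) - 1 : ℝ) * (2 * ((j : ℕ) + 1) - 1) * q * Real.pi / p))) :
    (∀ j : Fin (p / 2), S ⟨p / 2 - 1, by omega⟩ j = S ⟨0, by omega⟩ j) ∧ S.det = 0 := by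
  have hp0 : (p : ℝ) ≠ 0 := by positivity
  have key : ∀ j : Fin (p / 2), S ⟨p / 2 - 1, by omega⟩ j = S ⟨0, by omega⟩ j := by
    intro j
    rw [hS, hS]
    congr 1
    congr 1
    set M : ℝ := (2 * ((j : ℕ) + 1) - 1 : ℝ) with hM
    have hcast : ((p / 2 - 1 : ℕ) : ℝ) = (p : ℝ) / 2 - 1 := by
      obtain ⟨k, hk⟩ := hpe
      subst hk
      push_cast [Nat.mul_div_cancel_left, show (k + k) / 2 = k by omega,
        show k ≥ 2 by omega]
      have : ((k - 1 : ℕ) : ℝ) = (k : ℝ) - 1 := by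
        have : 1 ≤ k := by omega
        push_cast [this]; ring
      rw [this]; ring_nf
    have h1 : (2 * (((⟨p / 2 - 1, by omega⟩ : Fin (p/2)) : ℕ) + 1) - 1 : ℝ) = (p : ℝ) - 1 := by
      simp only [hcast]; ring
    have h0 : (2 * (((⟨0, by omega⟩ : Fin (p/2)) : ℕ) + 1) - 1 : ℝ) = 1 := by
      norm_num
    rw [h1, h0, one_mul]
    set n : ℕ := (2 * ((j : ℕ) + 1) - 1) * q with hn
    have hnM : (n : ℝ) = M * q := by
      rw [hn, hM]
      push_cast [show 1 ≤ 2 * ((j : ℕ) + 1) by omega]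
      ring
    have hangle : ((p : ℝ) - 1) * M * q * π / p = (n : ℝ) * π - M * q * π / p := by
      rw [hnM]; field_simp
    have hnodd : Odd n := by
      refine Odd.mul ?_ hqo
      exact ⟨(j : ℕ), by omega⟩
    rw [hangle, Real.sin_nat_mul_pi_sub, hnodd.neg_one_pow]
    ring
  refine ⟨key, Matrix.det_zero_of_row_eq (i := ⟨p / 2 - 1, by omega⟩) (j := ⟨0, by omega⟩)
    (by simp [Fin.ext_iff]; omega) (funext key)⟩
end

section
/- For any odd integer q ≥ 3, coprime integer p with 2 ≤ p < q, and integers j ≠ k with 1 ≤ j, k ≤ (q-1)/2, the sum Σ_{i=1}^{(q-1)/2} sin((2i-1)(2j-1)pπ/q)·sin((2i-1)(2k-1)pπ/q) equals 0. -/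
/-! Writing `sin a * sin b = (cos (a - b) - cos (a + b)) / 2` splits the sum into two sums
`∑_{i=1}^{m} cos ((2i - 1) θ)` with `q = 2m + 1` and `θ = 2πnp/q`, where `n = j - k` and
`n = j + k - 1`. Multiplying such a sum by `2 sin θ` telescopes to `sin (2mθ) = sin (2πnp - θ) = -sin θ`,
and `sin θ ≠ 0` because `q ∤ np`; so each sum is `-1/2` and their difference vanishes. -/

open Real Finset

theorem two_mul_sin_mul_sum_Icc_cos_odd_mul (θ : ℝ) (m : ℕ) :
    2 * sin θ * ∑ i ∈ Icc 1 m, cos ((2 * (i : ℝ) - 1) * θ) = sin (2 * m * θ) := by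
  induction m with
  | zero => simp
  | succ m ih =>
    rw [sum_Icc_succ_top (by omega), mul_add, ih]
    push_cast
    rw [show (2 * ((m : ℝ) + 1) - 1) = 2 * m + 1 by ring,
      show 2 * ((m : ℝ) + 1) * θ = (2 * m + 1) * θ + θ by ring,
      show 2 * (m : ℝ) * θ = (2 * m + 1) * θ - θ by ring, sin_add, sin_sub]
    ring

theorem sum_Icc_cos_odd_mul_two_pi_div_eq_neg_half (m : ℕ) (n : ℤ)
    (hn : ¬ (2 * m + 1 : ℤ) ∣ n) :
    ∑ i ∈ Icc 1 m, cos ((2 * (i : ℝ) - 1) * (2 * π * n / (2 * m + 1))) = -(1 / 2) := by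
  set θ : ℝ := 2 * π * n / (2 * m + 1) with hθ
  have hq : (2 * m + 1 : ℝ) ≠ 0 := by positivity
  have hsin : sin θ ≠ 0 := by
    rintro hzero
    obtain ⟨t, ht⟩ := sin_eq_zero_iff.mp hzero
    have htR : (t : ℝ) * (2 * m + 1) = 2 * n := by
      rw [hθ] at ht
      field_simp at ht
      linarith
    have htZ : t * (2 * m + 1) = 2 * n := by exact_mod_cast htR
    have hodd : IsCoprime (2 * m + 1 : ℤ) 2 := ⟨1, -m, by ring⟩
    exact hn (hodd.dvd_of_dvd_mul_left ⟨t, by linarith⟩)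
  have hwrap : sin (2 * m * θ) = -sin θ := by
    rw [show 2 * (m : ℝ) * θ = n * (2 * π) - θ by rw [hθ]; field_simp; ring,
      sin_int_mul_two_pi_sub]
  have hsum := two_mul_sin_mul_sum_Icc_cos_odd_mul θ m
  rw [hwrap] at hsum
  have hfactor : sin θ * (2 * ∑ i ∈ Icc 1 m, cos ((2 * (i : ℝ) - 1) * θ) + 1) = 0 := by
    linear_combination hsum
  have := (mul_eq_zero.mp hfactor).resolve_left hsin
  linarith

theorem not_dvd_mul_of_coprime_of_abs_lt {p q : ℕ} (hcop : Nat.Coprime p q) {d : ℤ}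
    (hd0 : d ≠ 0) (hdq : |d| < q) : ¬ (q : ℤ) ∣ d * p :=
  fun hdvd => hd0 <| Int.eq_zero_of_abs_lt_dvd
    ((Nat.isCoprime_iff_coprime.mpr hcop.symm).dvd_of_dvd_mul_right hdvd) hdq

theorem stmt_8_general (p q j k : ℕ) (hqo : Odd q) (hcop : Nat.Coprime p q)
    (hj1 : 1 ≤ j) (hj2 : j ≤ (q - 1) / 2) (hk1 : 1 ≤ k) (hk2 : k ≤ (q - 1) / 2)
    (hjk : j ≠ k) :
    ∑ i ∈ Finset.Icc 1 ((q - 1) / 2),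
      Real.sin ((2 * (i : ℝ) - 1) * (2 * (j : ℝ) - 1) * p * Real.pi / q) *
      Real.sin ((2 * (i : ℝ) - 1) * (2 * (k : ℝ) - 1) * p * Real.pi / q) = 0 := by
  obtain ⟨m, rfl⟩ := hqo
  rw [show (2 * m + 1 - 1) / 2 = m by omega] at hj2 hk2 ⊢
  have hdiff := sum_Icc_cos_odd_mul_two_pi_div_eq_neg_half m (((j : ℤ) - k) * p)
    (not_dvd_mul_of_coprime_of_abs_lt hcop (by omega) (by push_cast; rw [abs_lt]; omega))
  have hsum := sum_Icc_cos_odd_mul_two_pi_div_eq_neg_half m (((j : ℤ) + k - 1) * p)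
    (not_dvd_mul_of_coprime_of_abs_lt hcop (by omega) (by push_cast; rw [abs_lt]; omega))
  push_cast at hdiff hsum ⊢
  calc ∑ i ∈ Icc 1 m, sin ((2 * (i : ℝ) - 1) * (2 * j - 1) * p * π / (2 * m + 1)) *
          sin ((2 * (i : ℝ) - 1) * (2 * k - 1) * p * π / (2 * m + 1))
      = ∑ i ∈ Icc 1 m,
          (cos ((2 * (i : ℝ) - 1) * (2 * π * ((j - k) * p) / (2 * m + 1))) -
            cos ((2 * (i : ℝ) - 1) * (2 * π * ((j + k - 1) * p) / (2 * m + 1)))) / 2 := by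
        refine sum_congr rfl fun i _ => ?_
        set a := (2 * (i : ℝ) - 1) * (2 * j - 1) * p * π / (2 * m + 1)
        set b := (2 * (i : ℝ) - 1) * (2 * k - 1) * p * π / (2 * m + 1)
        rw [show (2 * (i : ℝ) - 1) * (2 * π * ((j - k) * p) / (2 * m + 1)) = a - b by ring,
          show (2 * (i : ℝ) - 1) * (2 * π * ((j + k - 1) * p) / (2 * m + 1)) = a + b by ring,
          cos_sub, cos_add]
        ring
    _ = 0 := by rw [← sum_div, sum_sub_distrib, hdiff, hsum]; ring

theorem stmt_8 (p q j k : ℕ) (hq3 : 3 ≤ q) (hqo : Odd q) (hcop : Nat.Coprime p q)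
    (hp : 2 ≤ p) (hpq : p < q)
    (hj1 : 1 ≤ j) (hj2 : j ≤ (q - 1) / 2) (hk1 : 1 ≤ k) (hk2 : k ≤ (q - 1) / 2)
    (hjk : j ≠ k) :
    ∑ i ∈ Finset.Icc 1 ((q - 1) / 2),
      Real.sin ((2 * (i : ℝ) - 1) * (2 * (j : ℝ) - 1) * p * Real.pi / q) *
      Real.sin ((2 * (i : ℝ) - 1) * (2 * (k : ℝ) - 1) * p * Real.pi / q) = 0 :=
  stmt_8_general p q j k hqo hcop hj1 hj2 hk1 hk2 hjk
end

section
/- Let p, q be coprime with p odd, q even, 2 ≤ p < q. Define for 1 ≤ i ≤ q/2, 1 ≤ j ≤ (p-1)/2 the quantities S_{(1,1)}^{(j,2i-1)} = √(8/(pq))·(-1)^j·sin(jqπ/p)·sin((2i-1)pπ/q) and S_{(1,q-1)}^{(j,2i-1)} = √(8/(pq))·(-1)^{2i+j(q-1)}·sin(jqπ/p)·sin(p(q-1)(2i-1)π/q). Then S_{(1,1)}^{(j,2i-1)} = S_{(1,q-1)}^{(j,2i-1)} for all i, j; hence the S-matrix of C₆ is degenerate. -/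
open Real

theorem stmt_13 (p q : ℕ) (hcop : Nat.Coprime p q) (hp : 2 ≤ p) (hpq : p < q)
    (hpo : Odd p) (hqe : Even q) :
    ∀ i ∈ Finset.Icc 1 (q / 2), ∀ j ∈ Finset.Icc 1 ((p - 1) / 2),
      Real.sqrt (8 / ((p : ℝ) * q)) * (-1 : ℝ) ^ j *
        Real.sin ((j : ℝ) * q * Real.pi / p) *
        Real.sin ((2 * (i : ℝ) - 1) * p * Real.pi / q)
      = Real.sqrt (8 / ((p : ℝ) * q)) * (-1 : ℝ) ^ (2 * i + j * (q - 1)) *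
        Real.sin ((j : ℝ) * q * Real.pi / p) *
        Real.sin ((p : ℝ) * ((q : ℝ) - 1) * (2 * (i : ℝ) - 1) * Real.pi / q) := by
  intro i hi j hj
  simp only [Finset.mem_Icc] at hi hj
  have hi1 : 1 ≤ i := hi.1
  have hq0 : (q : ℝ) ≠ 0 := Nat.cast_ne_zero.mpr (by omega)
  have hq1 : Odd (q - 1) := Nat.Even.sub_odd (by omega) hqe odd_one
  have hsign : ((-1 : ℝ)) ^ (2 * i + j * (q - 1)) = (-1 : ℝ) ^ j := by
    rcases Nat.even_or_odd j with hje | hjo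
    · rw [Even.neg_one_pow hje, Even.neg_one_pow
        ((even_two_mul i).add (hje.mul_right _))]
    · rw [Odd.neg_one_pow hjo, Odd.neg_one_pow
        ((even_two_mul i).add_odd (hjo.mul hq1))]
  have hodd : Odd (p * (2 * i - 1)) := hpo.mul (by rw [Nat.odd_iff]; omega)
  obtain ⟨m, hm⟩ := hodd
  have hcast : ((p * (2 * i - 1) : ℕ) : ℝ) = (p : ℝ) * (2 * (i : ℝ) - 1) := by
    rw [Nat.cast_mul, Nat.cast_sub (by omega : 1 ≤ 2 * i)]
    push_cast; ring
  have hx : (p : ℝ) * ((q : ℝ) - 1) * (2 * (i : ℝ) - 1) * π / q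
      = (π - (2 * (i : ℝ) - 1) * p * π / q) + (m : ℝ) * (2 * π) := by
    have h2 : ((p * (2 * i - 1) : ℕ) : ℝ) = 2 * (m : ℝ) + 1 := by
      rw [hm]; push_cast; ring
    have h3 : (p : ℝ) * (2 * (i : ℝ) - 1) = 2 * (m : ℝ) + 1 := by
      rw [← hcast, h2]
    have h4 : (p : ℝ) * ((q : ℝ) - 1) * (2 * (i : ℝ) - 1) * π / q
        = ((p : ℝ) * (2 * (i : ℝ) - 1)) * π - (2 * (i : ℝ) - 1) * p * π / q := by
      field_simp
    rw [h4, h3]; ring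
  have hmain : Real.sin ((p : ℝ) * ((q : ℝ) - 1) * (2 * (i : ℝ) - 1) * π / q)
      = Real.sin ((2 * (i : ℝ) - 1) * (p : ℝ) * π / q) := by
    rw [hx, Real.sin_add_nat_mul_two_pi, Real.sin_pi_sub]
  rw [hsign, hmain]
end

section
/- Let p, q be coprime odd integers with 5 ≤ p < q. For indices (i,j) ≠ (i',j') with 1 ≤ i,i' ≤ (p-1)/2 and 1 ≤ j,j' ≤ (q-1)/2, the double sum Σ_{k=1}^{(p-1)/2} Σ_{l=1}^{(q-1)/2} sin((2i-1)(2k-1)qπ/p)·sin((2j-1)(2l-1)pπ/q)·sin((2i'-1)(2k-1)qπ/p)·sin((2j'-1)(2l-1)pπ/q) equals 0, and for (i,j) = (i',j') it equals pq/16. -/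
/-!
The double sum factors into a product of two one-dimensional sums, so it suffices to show that
the vectors `k ↦ sin ((2i-1)(2k-1)qπ/p)`, `1 ≤ k ≤ (p-1)/2`, are orthogonal of squared length `p/4`.
By product-to-sum, each inner product is half the difference of two sums
`∑ₖ cos ((2k-1)·2πd/p)`, with `d = (i-i')q` and `d = (i+i'-1)q`. Telescoping against `2 sin θ`
shows that such a sum is `-1/2` unless `p ∣ d`, and `(p-1)/2` if `p ∣ d`; coprimality of `p` and `q`
reduces `p ∣ d` to `i = i'` for the first frequency and rules it out for the second.
-/

open Real Finset

theorem two_sin_mul_sum_cos_odd_mul (θ : ℝ) (m : ℕ) :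
    2 * sin θ * ∑ k ∈ Icc 1 m, cos ((2 * k - 1) * θ) = sin (2 * m * θ) := by
  induction m with
  | zero => simp
  | succ m ih =>
    rw [sum_Icc_succ_top (by omega), mul_add, ih]
    have h₁ : 2 * ((m + 1 : ℕ) : ℝ) * θ = (2 * m + 1) * θ + θ := by push_cast; ring
    have h₂ : 2 * (m : ℝ) * θ = (2 * m + 1) * θ - θ := by ring
    rw [h₁, h₂, sin_add, sin_sub]
    push_cast
    ring_nf

theorem sin_two_pi_mul_div_ne_zero {p : ℕ} (hp : Odd p) {d : ℤ} (hd : ¬(p : ℤ) ∣ d) :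
    sin (2 * π * d / p) ≠ 0 := by
  rw [Ne, sin_eq_zero_iff]
  rintro ⟨n, hn⟩
  have hp0 : (p : ℝ) ≠ 0 := by exact_mod_cast hp.pos.ne'
  have hn' : ((n * p : ℤ) : ℝ) = ((2 * d : ℤ) : ℝ) := by
    push_cast
    field_simp at hn
    nlinarith [pi_pos]
  have h2 : IsCoprime (p : ℤ) 2 := Nat.isCoprime_iff_coprime.mpr (Nat.coprime_two_right.mpr hp)
  exact hd (h2.dvd_of_dvd_mul_left ⟨n, by rw [Int.cast_inj] at hn'; linarith⟩)

theorem sum_cos_odd_mul_two_pi_div {p : ℕ} (hp : Odd p) (d : ℤ) :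
    ∑ k ∈ Icc 1 ((p - 1) / 2), cos ((2 * k - 1) * (2 * π * d / p)) =
      if (p : ℤ) ∣ d then (((p - 1) / 2 : ℕ) : ℝ) else -1 / 2 := by
  obtain ⟨m, rfl⟩ := hp
  have hm : (2 * m + 1 - 1) / 2 = m := by omega
  rw [hm]
  split_ifs with hd
  · obtain ⟨n, rfl⟩ := hd
    have hone : ∀ k ∈ Icc 1 m,
        cos ((2 * k - 1) * (2 * π * ((2 * m + 1 : ℕ) * n : ℤ) / (2 * m + 1 : ℕ))) = 1 := by
      intro k _
      convert cos_int_mul_two_pi ((2 * k - 1) * n) using 2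
      push_cast
      field_simp
    rw [sum_congr rfl hone]
    simp
  · have hθ := sin_two_pi_mul_div_ne_zero (odd_two_mul_add_one m) hd
    set θ := 2 * π * d / (2 * m + 1 : ℕ)
    have h2m : 2 * m * θ = d * (2 * π) - θ := by
      simp only [θ]
      push_cast
      field_simp
      ring
    have htele := two_sin_mul_sum_cos_odd_mul θ m
    rw [h2m, sin_int_mul_two_pi_sub] at htele
    apply mul_left_cancel₀ (mul_ne_zero two_ne_zero hθ)
    linear_combination htele

theorem sum_sin_odd_mul_sin_odd_mul {p q : ℕ} (hp : Odd p) (hpq : Nat.Coprime p q) {i i' : ℕ}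
    (hi : i ∈ Icc 1 ((p - 1) / 2)) (hi' : i' ∈ Icc 1 ((p - 1) / 2)) :
    ∑ k ∈ Icc 1 ((p - 1) / 2),
      sin ((2 * (i : ℝ) - 1) * (2 * (k : ℝ) - 1) * q * π / p) *
        sin ((2 * (i' : ℝ) - 1) * (2 * (k : ℝ) - 1) * q * π / p) =
      if i = i' then (p : ℝ) / 4 else 0 := by
  rw [mem_Icc] at hi hi'
  have hp0 : (p : ℝ) ≠ 0 := by exact_mod_cast hp.pos.ne'
  have hpq' : IsCoprime (p : ℤ) q := Nat.isCoprime_iff_coprime.mpr hpq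
  have hterm : ∀ k : ℕ,
      sin ((2 * (i : ℝ) - 1) * (2 * (k : ℝ) - 1) * q * π / p) *
        sin ((2 * (i' : ℝ) - 1) * (2 * (k : ℝ) - 1) * q * π / p) =
      (cos ((2 * k - 1) * (2 * π * (((i : ℤ) - i') * q : ℤ) / p)) -
        cos ((2 * k - 1) * (2 * π * (((i : ℤ) + i' - 1) * q : ℤ) / p))) / 2 := by
    intro k
    rw [eq_div_iff two_ne_zero, mul_comm, ← mul_assoc, two_mul_sin_mul_sin]
    congr 2 <;> push_cast <;> field_simp <;> ring
  -- `|i - i'| < p` and `0 < i + i' - 1 < p`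
  have hdiff : (p : ℤ) ∣ ((i : ℤ) - i') * q ↔ i = i' := by
    refine ⟨fun h ↦ ?_, fun h ↦ by simp [h]⟩
    have := Int.eq_zero_of_abs_lt_dvd (hpq'.dvd_of_dvd_mul_right h) (by rw [abs_lt]; omega)
    omega
  have hsum : ¬(p : ℤ) ∣ ((i : ℤ) + i' - 1) * q := fun h ↦ by
    have := Int.eq_zero_of_abs_lt_dvd (hpq'.dvd_of_dvd_mul_right h) (by rw [abs_lt]; omega)
    omega
  simp only [hterm]
  rw [← sum_div, sum_sub_distrib, sum_cos_odd_mul_two_pi_div hp, sum_cos_odd_mul_two_pi_div hp,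
    if_neg hsum]
  simp only [hdiff]
  split_ifs
  · obtain ⟨m, rfl⟩ := hp
    rw [show (2 * m + 1 - 1) / 2 = m by omega]
    push_cast
    ring
  · ring

theorem stmt_14_general (p q : ℕ) (hcop : Nat.Coprime p q) (hpo : Odd p) (hqo : Odd q)
    (i i' j j' : ℕ)
    (hi : i ∈ Finset.Icc 1 ((p - 1) / 2)) (hi' : i' ∈ Finset.Icc 1 ((p - 1) / 2))
    (hj : j ∈ Finset.Icc 1 ((q - 1) / 2)) (hj' : j' ∈ Finset.Icc 1 ((q - 1) / 2)) :
    ((i, j) ≠ (i', j') →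
      ∑ k ∈ Finset.Icc 1 ((p - 1) / 2), ∑ l ∈ Finset.Icc 1 ((q - 1) / 2),
        Real.sin ((2 * (i : ℝ) - 1) * (2 * (k : ℝ) - 1) * q * Real.pi / p) *
        Real.sin ((2 * (j : ℝ) - 1) * (2 * (l : ℝ) - 1) * p * Real.pi / q) *
        (Real.sin ((2 * (i' : ℝ) - 1) * (2 * (k : ℝ) - 1) * q * Real.pi / p) *
         Real.sin ((2 * (j' : ℝ) - 1) * (2 * (l : ℝ) - 1) * p * Real.pi / q)) = 0) ∧
    ((i, j) = (i', j') →
      ∑ k ∈ Finset.Icc 1 ((p - 1) / 2), ∑ l ∈ Finset.Icc 1 ((q - 1) / 2),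
        Real.sin ((2 * (i : ℝ) - 1) * (2 * (k : ℝ) - 1) * q * Real.pi / p) *
        Real.sin ((2 * (j : ℝ) - 1) * (2 * (l : ℝ) - 1) * p * Real.pi / q) *
        (Real.sin ((2 * (i' : ℝ) - 1) * (2 * (k : ℝ) - 1) * q * Real.pi / p) *
         Real.sin ((2 * (j' : ℝ) - 1) * (2 * (l : ℝ) - 1) * p * Real.pi / q))
        = (p : ℝ) * q / 16) := by
  simp_rw [mul_mul_mul_comm _ (sin ((2 * (j : ℝ) - 1) * _ * p * π / q)), ← sum_mul_sum,
    sum_sin_odd_mul_sin_odd_mul hpo hcop hi hi', sum_sin_odd_mul_sin_odd_mul hqo hcop.symm hj hj',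
    Ne, Prod.mk.injEq]
  refine ⟨fun hne ↦ ?_, fun ⟨hii, hjj⟩ ↦ ?_⟩
  · split_ifs with hii hjj <;> simp_all
  · rw [if_pos hii, if_pos hjj]
    ring

theorem stmt_14 (p q : ℕ) (hcop : Nat.Coprime p q) (hpo : Odd p) (hqo : Odd q)
    (hp : 5 ≤ p) (hpq : p < q)
    (i i' j j' : ℕ)
    (hi : i ∈ Finset.Icc 1 ((p - 1) / 2)) (hi' : i' ∈ Finset.Icc 1 ((p - 1) / 2))
    (hj : j ∈ Finset.Icc 1 ((q - 1) / 2)) (hj' : j' ∈ Finset.Icc 1 ((q - 1) / 2)) :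
    ((i, j) ≠ (i', j') →
      ∑ k ∈ Finset.Icc 1 ((p - 1) / 2), ∑ l ∈ Finset.Icc 1 ((q - 1) / 2),
        Real.sin ((2 * (i : ℝ) - 1) * (2 * (k : ℝ) - 1) * q * Real.pi / p) *
        Real.sin ((2 * (j : ℝ) - 1) * (2 * (l : ℝ) - 1) * p * Real.pi / q) *
        (Real.sin ((2 * (i' : ℝ) - 1) * (2 * (k : ℝ) - 1) * q * Real.pi / p) *
         Real.sin ((2 * (j' : ℝ) - 1) * (2 * (l : ℝ) - 1) * p * Real.pi / q)) = 0) ∧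
    ((i, j) = (i', j') →
      ∑ k ∈ Finset.Icc 1 ((p - 1) / 2), ∑ l ∈ Finset.Icc 1 ((q - 1) / 2),
        Real.sin ((2 * (i : ℝ) - 1) * (2 * (k : ℝ) - 1) * q * Real.pi / p) *
        Real.sin ((2 * (j : ℝ) - 1) * (2 * (l : ℝ) - 1) * p * Real.pi / q) *
        (Real.sin ((2 * (i' : ℝ) - 1) * (2 * (k : ℝ) - 1) * q * Real.pi / p) *
         Real.sin ((2 * (j' : ℝ) - 1) * (2 * (l : ℝ) - 1) * p * Real.pi / q))
        = (p : ℝ) * q / 16) :=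
  stmt_14_general p q hcop hpo hqo i i' j j' hi hi' hj hj'
end

section
/- Let p, q be coprime integers with 2 ≤ p < q. The 2×2 matrix (8/(pq))·sin²(qπ/p)·sin²(pπ/q)·[[−1, (−1)^{p+q}], [(−1)^{p+q}, (−1)^{pq+1}]] is invertible if and only if both p and q are odd. -/
/-!
The matrix is a scalar multiple of a sign matrix whose determinant is `(-1)^(pq) - 1`, which
is nonzero exactly when `pq` is odd. The scalar is nonzero: `sin (q π / p)` vanishes only if
`p ∣ q`, excluded by coprimality and `p ≥ 2`, and `sin (p π / q)` only if `q ∣ p`, excluded by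
`0 < p < q`.
-/

open Real Matrix

theorem Real.sin_nat_mul_pi_div_eq_zero_iff {m n : ℕ} (hn : n ≠ 0) :
    sin (m * π / n) = 0 ↔ n ∣ m := by
  have hn' : (n : ℝ) ≠ 0 := Nat.cast_ne_zero.mpr hn
  rw [sin_eq_zero_iff]
  constructor
  · rintro ⟨k, hk⟩
    rw [eq_div_iff hn', mul_right_comm] at hk
    have hkm : (k * n : ℤ) = m := by exact_mod_cast mul_right_cancel₀ pi_ne_zero hk
    exact Int.natCast_dvd_natCast.mp ⟨k, by rw [← hkm, mul_comm]⟩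
  · rintro ⟨k, rfl⟩
    exact ⟨k, by push_cast; field_simp⟩

theorem Matrix.det_fin_two_neg_one_pow {R : Type*} [CommRing R] (a b : ℕ) :
    !![(-1 : R), (-1) ^ a; (-1) ^ a, (-1) ^ (b + 1)].det = (-1) ^ b - 1 := by
  rw [det_fin_two_of, ← pow_add, ← two_mul, pow_mul, neg_one_sq, one_pow, pow_succ]
  ring

theorem neg_one_pow_sub_one_ne_zero_iff {R : Type*} [Ring R] (h2 : (2 : R) ≠ 0) (n : ℕ) :
    (-1 : R) ^ n - 1 ≠ 0 ↔ Odd n := by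
  rcases n.even_or_odd with hn | hn
  · simp [hn.neg_one_pow, Nat.not_odd_iff_even.mpr hn]
  · simp only [hn.neg_one_pow, hn, iff_true]
    rwa [← neg_add', neg_ne_zero, one_add_one_eq_two]

theorem stmt_15 (p q : ℕ) (hcop : Nat.Coprime p q) (hp : 2 ≤ p) (hpq : p < q) :
    IsUnit ((8 / ((p : ℝ) * q) * Real.sin ((q : ℝ) * Real.pi / p) ^ 2 *
        Real.sin ((p : ℝ) * Real.pi / q) ^ 2) •
      !![(-1 : ℝ), (-1 : ℝ) ^ (p + q); (-1 : ℝ) ^ (p + q), (-1 : ℝ) ^ (p * q + 1)])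
    ↔ (Odd p ∧ Odd q) := by
  have hp0 : p ≠ 0 := by omega
  have hq0 : q ≠ 0 := by omega
  have hsin_qp : sin (q * π / p) ≠ 0 := by
    rw [Ne, sin_nat_mul_pi_div_eq_zero_iff hp0]
    exact fun h => by have := hcop.eq_one_of_dvd h; omega
  have hsin_pq : sin (p * π / q) ≠ 0 := by
    rw [Ne, sin_nat_mul_pi_div_eq_zero_iff hq0]
    exact fun h => absurd (Nat.le_of_dvd (by omega) h) (by omega)
  have hc : 8 / ((p : ℝ) * q) * sin (q * π / p) ^ 2 * sin (p * π / q) ^ 2 ≠ 0 := by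
    have : (8 : ℝ) / (p * q) ≠ 0 := by positivity
    exact mul_ne_zero (mul_ne_zero this (pow_ne_zero _ hsin_qp)) (pow_ne_zero _ hsin_pq)
  rw [← Units.val_mk0 hc, ← Units.smul_def, isUnit_smul_iff, isUnit_iff_isUnit_det,
    det_fin_two_neg_one_pow, isUnit_iff_ne_zero, neg_one_pow_sub_one_ne_zero_iff two_ne_zero,
    Nat.odd_mul]
end
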